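/- Let ζ > 0 and let (λ², φ) be an eigenpair of the beam problem with eigenvalue written as λ². Then ζ (φ‴(0))² = λ² ∫₀¹ (φ(x))² dx + ∫₀¹ (3 (φ″(x))² + 5ζ (φ‴(x))²) dx. -/

import Mathlib

/-!
Rellich multiplier argument: multiplying `φ⁗ - ζ φ⁽⁶⁾ - λ² φ = 0` by `2 (1 - x) φ′` and
integrating by parts shows that `λ² φ² + 3 (φ″)² + 5 ζ (φ‴)²` has an explicit primitive
`rellichPrimitive`, a quadratic form in `φ, …, φ⁽⁵⁾` with coefficients affine in `x`. At `x = 1`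
the weight `x - 1` and the boundary conditions make it vanish; at `x = 0` the clamped conditions
leave only `-ζ (φ‴(0))²`.
-/

open Set MeasureTheory intervalIntegral

/-- `Dv m f x` is the `m`-th derivative of `f` on the interval `[0,1]`. -/
noncomputable def Dv (m : ℕ) (f : ℝ → ℝ) (x : ℝ) : ℝ :=
  iteratedDerivWithin m f (Icc (0:ℝ) 1) x

/-- The beam boundary conditions. -/
def BeamBC (ζ : ℝ) (f : ℝ → ℝ) : Prop :=
  f 0 = 0 ∧ Dv 1 f 0 = 0 ∧ Dv 2 f 0 = 0 ∧
  Dv 2 f 1 - ζ * Dv 4 f 1 = 0 ∧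
  ζ * Dv 5 f 1 - Dv 3 f 1 = 0 ∧
  ζ * Dv 3 f 1 = 0

/-- An eigenpair `(μ, φ)` of the beam problem. -/
def BeamEigenpair (ζ μ : ℝ) (φ : ℝ → ℝ) : Prop :=
  ContDiffOn ℝ 6 φ (Icc (0:ℝ) 1) ∧ BeamBC ζ φ ∧
  (¬ ∀ x ∈ Icc (0:ℝ) 1, φ x = 0) ∧
  (∀ x ∈ Icc (0:ℝ) 1, Dv 4 φ x - ζ * Dv 6 φ x = μ * φ x)

theorem ContDiffOn.hasDerivWithinAt_iteratedDerivWithin {𝕜 F : Type*} [NontriviallyNormedField 𝕜]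
    [NormedAddCommGroup F] [NormedSpace 𝕜 F] {f : 𝕜 → F} {s : Set 𝕜} {n : WithTop ℕ∞} {m : ℕ}
    (hf : ContDiffOn 𝕜 n f s) (hs : UniqueDiffOn 𝕜 s) (hm : m < n) {x : 𝕜} (hx : x ∈ s) :
    HasDerivWithinAt (iteratedDerivWithin m f s) (iteratedDerivWithin (m + 1) f s x) s x := by
  rw [iteratedDerivWithin_succ]
  exact ((hf.differentiableOn_iteratedDerivWithin hm hs) x hx).hasDerivWithinAt

theorem integral_eq_sub_of_hasDerivWithinAt_Icc {E : Type*} [NormedAddCommGroup E]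
    [NormedSpace ℝ E] [CompleteSpace E] {f f' : ℝ → E} {a b : ℝ} (hab : a ≤ b)
    (hf : ∀ x ∈ Icc a b, HasDerivWithinAt f (f' x) (Icc a b) x)
    (hf' : IntervalIntegrable f' volume a b) :
    ∫ x in a..b, f' x = f b - f a :=
  integral_eq_sub_of_hasDeriv_right_of_le hab
    (fun x hx => (hf x hx).continuousWithinAt)
    (fun x hx => ((hf x (Ioo_subset_Icc_self hx)).hasDerivAt
      (Icc_mem_nhds hx.1 hx.2)).hasDerivWithinAt)
    hf'

section Beam

variable {ζ μ : ℝ} {φ : ℝ → ℝ}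

theorem Dv_zero (f : ℝ → ℝ) : Dv 0 f = f :=
  iteratedDerivWithin_zero

theorem hasDerivWithinAt_Dv {m : ℕ} (hφ : ContDiffOn ℝ 6 φ (Icc 0 1)) (hm : m < 6) {x : ℝ}
    (hx : x ∈ Icc (0 : ℝ) 1) :
    HasDerivWithinAt (Dv m φ) (Dv (m + 1) φ x) (Icc 0 1) x :=
  hφ.hasDerivWithinAt_iteratedDerivWithin (uniqueDiffOn_Icc one_pos) (by exact_mod_cast hm) hx

theorem continuousOn_Dv {m : ℕ} (hφ : ContDiffOn ℝ 6 φ (Icc 0 1)) (hm : m ≤ 6) :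
    ContinuousOn (Dv m φ) (Icc 0 1) :=
  hφ.continuousOn_iteratedDerivWithin (by exact_mod_cast hm) (uniqueDiffOn_Icc one_pos)

variable (ζ μ φ) in
noncomputable def rellichPrimitive (x : ℝ) : ℝ :=
  (x - 1) * (μ * φ x ^ 2 + Dv 2 φ x ^ 2 + ζ * Dv 3 φ x ^ 2 - 2 * Dv 1 φ x * Dv 3 φ x
      + 2 * ζ * Dv 1 φ x * Dv 5 φ x - 2 * ζ * Dv 2 φ x * Dv 4 φ x)
    + 2 * Dv 1 φ x * Dv 2 φ x - 2 * ζ * Dv 1 φ x * Dv 4 φ x + 4 * ζ * Dv 2 φ x * Dv 3 φ x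

theorem hasDerivWithinAt_rellichPrimitive (hφ : ContDiffOn ℝ 6 φ (Icc 0 1))
    (hode : ∀ x ∈ Icc (0 : ℝ) 1, Dv 4 φ x - ζ * Dv 6 φ x = μ * φ x) {x : ℝ}
    (hx : x ∈ Icc (0 : ℝ) 1) :
    HasDerivWithinAt (rellichPrimitive ζ μ φ)
      (μ * φ x ^ 2 + (3 * Dv 2 φ x ^ 2 + 5 * ζ * Dv 3 φ x ^ 2)) (Icc 0 1) x := by
  have h0 : HasDerivWithinAt φ (Dv 1 φ x) (Icc 0 1) x :=
    Dv_zero φ ▸ hasDerivWithinAt_Dv hφ (by norm_num) hx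
  have h1 := hasDerivWithinAt_Dv (m := 1) hφ (by norm_num) hx
  have h2 := hasDerivWithinAt_Dv (m := 2) hφ (by norm_num) hx
  have h3 := hasDerivWithinAt_Dv (m := 3) hφ (by norm_num) hx
  have h4 := hasDerivWithinAt_Dv (m := 4) hφ (by norm_num) hx
  have h5 := hasDerivWithinAt_Dv (m := 5) hφ (by norm_num) hx
  have hw := (hasDerivWithinAt_id x (Icc (0 : ℝ) 1)).sub_const 1
  have hfactor := ((((((h0.pow 2).const_mul μ).add (h2.pow 2)).add ((h3.pow 2).const_mul ζ)).sub
    ((h1.const_mul 2).mul h3)).add ((h1.const_mul (2 * ζ)).mul h5)).sub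
    ((h2.const_mul (2 * ζ)).mul h4)
  have H := (((hw.mul hfactor).add ((h1.const_mul 2).mul h2)).sub
    ((h1.const_mul (2 * ζ)).mul h4)).add ((h2.const_mul (4 * ζ)).mul h3)
  refine H.congr_deriv ?_
  norm_num
  linear_combination (2 * (1 - x) * Dv 1 φ x) * hode x hx

theorem rellichPrimitive_one (hbc : BeamBC ζ φ) (hζ : ζ ≠ 0) : rellichPrimitive ζ μ φ 1 = 0 := by
  obtain ⟨-, -, -, h24, -, h3⟩ := hbc
  have h3 : Dv 3 φ 1 = 0 := (mul_eq_zero.1 h3).resolve_left hζ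
  simp only [rellichPrimitive, h3]
  linear_combination 2 * Dv 1 φ 1 * h24

theorem rellichPrimitive_zero (hbc : BeamBC ζ φ) :
    rellichPrimitive ζ μ φ 0 = -(ζ * Dv 3 φ 0 ^ 2) := by
  obtain ⟨h0, h1, h2, -⟩ := hbc
  simp only [rellichPrimitive, h0, h1, h2]
  ring

end Beam

/-- For an eigenpair `(λ², φ)` of the beam problem,
`ζ (φ‴(0))² = λ² ∫₀¹ φ² + ∫₀¹ (3 (φ″)² + 5ζ (φ‴)²)`. -/
theorem stmt_8 (ζ : ℝ) (hζ : 0 < ζ) (lamsq : ℝ) (φ : ℝ → ℝ)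
    (h : BeamEigenpair ζ lamsq φ) :
    ζ * (Dv 3 φ 0)^2
      = lamsq * (∫ x in (0:ℝ)..1, (φ x)^2)
        + ∫ x in (0:ℝ)..1, (3 * (Dv 2 φ x)^2 + 5 * ζ * (Dv 3 φ x)^2) := by
  obtain ⟨hφ, hbc, -, hode⟩ := h
  have hint1 : IntervalIntegrable (fun x => lamsq * φ x ^ 2) volume 0 1 :=
    ((hφ.continuousOn.pow 2).const_smul lamsq).intervalIntegrable_of_Icc zero_le_one
  have hint2 : IntervalIntegrable (fun x => 3 * Dv 2 φ x ^ 2 + 5 * ζ * Dv 3 φ x ^ 2) volume 0 1 := by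
    refine ContinuousOn.intervalIntegrable_of_Icc zero_le_one ?_
    have h2 := continuousOn_Dv (m := 2) hφ (by norm_num)
    have h3 := continuousOn_Dv (m := 3) hφ (by norm_num)
    fun_prop
  rw [← intervalIntegral.integral_const_mul, ← integral_add hint1 hint2,
    integral_eq_sub_of_hasDerivWithinAt_Icc zero_le_one
      (fun x hx => hasDerivWithinAt_rellichPrimitive hφ hode hx) (hint1.add hint2),
    rellichPrimitive_one hbc hζ.ne', rellichPrimitive_zero hbc]
  ring
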